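/- (Second Deformation Lemma) Let S be an asymptotically compact semiflow on a complete metric space X, 𝒜 an attractor with attraction basin Ω, ℳ = {M₁, …, M_l} a Morse decomposition of 𝒜, and V a strict Morse–Lyapunov function of ℳ on Ω. Assume that for some 1 ≤ k₀ ≤ l the Morse set M_{k₀} consists of exactly one equilibrium E of the semiflow (S(t)E = E for all t ≥ 0). Let c = V(E), and let b > c be such that V has no generalized critical values in (c, b]. Then the level set V_c = {x ∈ Ω : V(x) ≤ c} is a strong deformation retract of V_b = {x ∈ Ω : V(x) ≤ b}. -/

import Mathlib

open Metric Set Filter Topology Bornology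

/-- A semiflow on a metric space `X`: a map `S : [0,∞) × X → X`, continuous on
`[0,∞) × X`, with `S 0 x = x` and `S (t+s) x = S t (S s x)` for `t, s ≥ 0`. -/
structure Semiflow (X : Type*) [MetricSpace X] where
  toFun : ℝ → X → X
  continuousOn : ContinuousOn (fun p : ℝ × X => toFun p.1 p.2) (Set.Ici (0:ℝ) ×ˢ Set.univ)
  map_zero : ∀ x, toFun 0 x = x
  map_add : ∀ (t s : ℝ), 0 ≤ t → 0 ≤ s → ∀ x, toFun (t + s) x = toFun t (toFun s x)

namespace Semiflow

variable {X : Type*} [MetricSpace X] (φ : Semiflow X)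

/-- Asymptotic compactness: every bounded sequence `x n`, with times `t n → ∞`,
such that `S (t n) (x n)` is bounded, has a convergent subsequence of images. -/
def AsympCompact : Prop :=
  ∀ (x : ℕ → X) (t : ℕ → ℝ), (∀ n, 0 ≤ t n) →
    IsBounded (Set.range x) → Tendsto t atTop atTop →
    IsBounded (Set.range fun n => φ.toFun (t n) (x n)) →
    ∃ (y : X) (k : ℕ → ℕ), StrictMono k ∧
      Tendsto (fun n => φ.toFun (t (k n)) (x (k n))) atTop (𝓝 y)

/-- `M` attracts `B`: for every `ε > 0` there is `T > 0` with
`S t B ⊆ B(M,ε)` for all `t > T`. -/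
def Attracts (M B : Set X) : Prop :=
  ∀ ε > (0:ℝ), ∃ T > (0:ℝ), ∀ t > T, ∀ x ∈ B, infDist (φ.toFun t x) M < ε

/-- `M` is invariant: `S t M = M` for all `t ≥ 0`. -/
def Invariant (M : Set X) : Prop :=
  ∀ t ≥ (0:ℝ), φ.toFun t '' M = M

/-- An attractor: a compact invariant set attracting a neighborhood of itself. -/
def IsAttractor (A : Set X) : Prop :=
  IsCompact A ∧ φ.Invariant A ∧ ∃ U : Set X, A ⊆ interior U ∧ φ.Attracts A U

/-- The attraction basin of `A`: points whose orbits converge to `A`. -/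
def basin (A : Set X) : Set X :=
  {x | Tendsto (fun t : ℝ => infDist (φ.toFun t x) A) atTop (𝓝 0)}

/-- The ω-limit set of a set `A`. -/
def omegaLimit (A : Set X) : Set X :=
  {y | ∃ (x : ℕ → X) (t : ℕ → ℝ), (∀ n, x n ∈ A) ∧ (∀ n, 0 ≤ t n) ∧
    Tendsto t atTop atTop ∧ Tendsto (fun n => φ.toFun (t n) (x n)) atTop (𝓝 y)}

/-- A complete trajectory of the semiflow. -/
def IsCompleteTraj (γ : ℝ → X) : Prop :=
  ∀ s t : ℝ, s ≤ t → γ t = φ.toFun (t - s) (γ s)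

/-- ω-limit set of a complete trajectory. -/
def trajOmega (γ : ℝ → X) : Set X :=
  {y | ∃ t : ℕ → ℝ, Tendsto t atTop atTop ∧ Tendsto (fun n => γ (t n)) atTop (𝓝 y)}

/-- α-limit set of a complete trajectory. -/
def trajAlpha (γ : ℝ → X) : Set X :=
  {y | ∃ t : ℕ → ℝ, Tendsto t atTop atBot ∧ Tendsto (fun n => γ (t n)) atTop (𝓝 y)}

/-- The dual repeller of `A` inside `𝒜`. -/
def dualRepeller (𝒜 A : Set X) : Set X :=
  {x ∈ 𝒜 | φ.omegaLimit {x} ∩ A = ∅}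

/-- `A` is an attractor of the restricted semiflow on the invariant set `𝒜`:
`A ⊆ 𝒜` is compact, invariant, and attracts a relative neighborhood of itself in `𝒜`. -/
def IsAttractorIn (𝒜 A : Set X) : Prop :=
  A ⊆ 𝒜 ∧ IsCompact A ∧ φ.Invariant A ∧
    ∃ V : Set X, IsOpen V ∧ A ⊆ V ∧ φ.Attracts A (𝒜 ∩ V)

/-- `M 1, …, M l` is a Morse decomposition of `𝒜` with Morse filtration
`∅ = A 0 ⊊ A 1 ⊊ ⋯ ⊊ A l = 𝒜`. -/
def IsMorseDecompositionWithFiltration (𝒜 : Set X) (l : ℕ) (M A : ℕ → Set X) : Prop :=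
  A 0 = (∅ : Set X) ∧ A l = 𝒜 ∧
  (∀ k, 1 ≤ k → k ≤ l → φ.IsAttractorIn 𝒜 (A k)) ∧
  (∀ k, 1 ≤ k → k ≤ l → A (k - 1) ⊂ A k) ∧
  (∀ k, 1 ≤ k → k ≤ l → M k = A k ∩ φ.dualRepeller 𝒜 (A (k - 1)))

/-- `M 1, …, M l` is a Morse decomposition of `𝒜`. -/
def IsMorseDecomposition (𝒜 : Set X) (l : ℕ) (M : ℕ → Set X) : Prop :=
  ∃ A : ℕ → Set X, φ.IsMorseDecompositionWithFiltration 𝒜 l M A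

/-- The Dini derivative of `V` along the semiflow. -/
noncomputable def dini (V : X → ℝ) (x : X) : ℝ :=
  Filter.limsup (fun t : ℝ => (V (φ.toFun t x) - V x) / t) (𝓝[>] (0:ℝ))

end Semiflow

/-- `A ⊂⊂ B`: the closure of `A` is contained in the interior of `B` and
`dist (A, ∂B) > 0`. -/
def WayInside {X : Type*} [MetricSpace X] (A B : Set X) : Prop :=
  closure A ⊆ interior B ∧ ∃ δ > (0:ℝ), ∀ x ∈ A, ∀ y ∈ frontier B, δ ≤ dist x y

/-- `V` is radially unbounded on the open set `Ω`. -/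
def RadiallyUnbounded {X : Type*} [MetricSpace X] (V : X → ℝ) (Ω : Set X) : Prop :=
  ∀ R > (0:ℝ), ∃ B : Set X, IsBounded B ∧ IsClosed B ∧ B ⊆ Ω ∧ WayInside B Ω ∧
    ∀ x ∈ Ω \ B, R < V x

/-- `F` is a strong deformation retract of `E`. -/
def IsStrongDeformationRetract {X : Type*} [MetricSpace X] (F E : Set X) : Prop :=
  F ⊆ E ∧ ∃ H : ℝ × X → X, ContinuousOn H (Set.Icc (0:ℝ) 1 ×ˢ E) ∧
    (∀ x ∈ E, H (0, x) = x) ∧ (∀ x ∈ E, H (1, x) ∈ F) ∧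
    (∀ σ ∈ Set.Icc (0:ℝ) 1, ∀ x ∈ F, H (σ, x) = x) ∧
    (∀ σ ∈ Set.Icc (0:ℝ) 1, ∀ x ∈ E, H (σ, x) ∈ E)

namespace Semiflow

variable {X : Type*} [MetricSpace X] (φ : Semiflow X)

/-- A Morse–Lyapunov function of the Morse decomposition `M` on `Ω`. -/
def IsMorseLyapunov (Ω : Set X) (l : ℕ) (M : ℕ → Set X) (V : X → ℝ) : Prop :=
  ContinuousOn V Ω ∧
  (∀ k, 1 ≤ k → k ≤ l → ∃ c : ℝ, ∀ x ∈ M k, V x = c) ∧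
  (∀ x ∈ Ω \ ⋃ k ∈ Set.Icc 1 l, M k,
    StrictAntiOn (fun t : ℝ => V (φ.toFun t x)) (Set.Ici (0:ℝ)))

/-- A strict Morse–Lyapunov function: the values on the Morse sets are increasing. -/
def IsStrictMorseLyapunov (Ω : Set X) (l : ℕ) (M : ℕ → Set X) (V : X → ℝ) : Prop :=
  φ.IsMorseLyapunov Ω l M V ∧ ∃ c : ℕ → ℝ,
    (∀ k, 1 ≤ k → k ≤ l → ∀ x ∈ M k, V x = c k) ∧
    (∀ j k, 1 ≤ j → j < k → k ≤ l → c j < c k)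

end Semiflow

/-
The deformation flows each point of `V_b` along its orbit until the orbit first reaches the
level `c`, time being reparametrised by `σ ↦ σ / (1 - σ)`, so that `σ = 1` corresponds to the
first hitting time of `{V ≤ c}`; orbits that never reach that level are sent to `E`.
Since `V` strictly decreases along every orbit of `{c ≤ V ≤ b}` other than `E`, hitting
times depend continuously on the point away from `E`. Where they blow up, continuity comes from
asymptotic compactness: if the orbits of `xₙ → x₀` stay above `c` up to times `sₙ → ∞`, the
limits of `S(sₙ - m) xₙ` along an ultrafilter form a backward orbit in `𝒜` along which `V` is
monotone with values in `[c, b]`. Its limit points are rest points of `V`, hence equal to `E`,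
and this forces `V = c` on the backward orbit and then `S(sₙ) xₙ → E`.
-/

theorem isCompact_closure_of_forall_exists_subseq {Y : Type*} [PseudoMetricSpace Y] {s : Set Y}
    (hs : ∀ u : ℕ → Y, (∀ n, u n ∈ s) →
      ∃ y, ∃ ψ : ℕ → ℕ, StrictMono ψ ∧ Tendsto (u ∘ ψ) atTop (𝓝 y)) :
    IsCompact (closure s) := by
  refine IsSeqCompact.isCompact fun v hv => ?_
  choose u hus huv using fun n =>
    Metric.mem_closure_iff.1 (hv n) (1 / (n + 1)) Nat.one_div_pos_of_nat
  obtain ⟨y, ψ, hψ, hy⟩ := hs u hus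
  refine ⟨y, isClosed_closure.mem_of_tendsto hy (.of_forall fun n => subset_closure (hus _)),
    ψ, hψ, hy.congr_dist ?_⟩
  refine squeeze_zero (fun _ => dist_nonneg) (fun n => ?_)
    (tendsto_one_div_add_atTop_nhds_zero_nat.comp hψ.tendsto_atTop)
  rw [dist_comm]
  exact (huv _).le

namespace Semiflow

variable {X : Type*} [MetricSpace X] (φ : Semiflow X)

theorem tendsto_toFun {ι : Type*} {l : Filter ι} {t : ι → ℝ} {x : ι → X} {t₀ : ℝ} {x₀ : X}
    (ht₀ : 0 ≤ t₀) (ht : Tendsto t l (𝓝 t₀)) (htl : ∀ᶠ i in l, 0 ≤ t i)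
    (hx : Tendsto x l (𝓝 x₀)) :
    Tendsto (fun i => φ.toFun (t i) (x i)) l (𝓝 (φ.toFun t₀ x₀)) :=
  (φ.continuousOn (t₀, x₀) ⟨ht₀, mem_univ _⟩).tendsto.comp <|
    tendsto_nhdsWithin_iff.2 ⟨ht.prodMk_nhds hx, htl.mono fun _ hi => ⟨hi, mem_univ _⟩⟩

theorem continuousOn_orbit (x : X) : ContinuousOn (fun t => φ.toFun t x) (Ici 0) :=
  φ.continuousOn.comp (continuous_id.prodMk continuous_const).continuousOn
    fun _ ht => ⟨ht, mem_univ _⟩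

theorem toFun_eq_toFun_sub {s t : ℝ} (hs : 0 ≤ s) (hst : s ≤ t) (x : X) :
    φ.toFun t x = φ.toFun (t - s) (φ.toFun s x) := by
  rw [← φ.map_add _ _ (sub_nonneg.2 hst) hs, sub_add_cancel]

theorem tendsto_toFun_of_isFixed {E : X} (hE : ∀ t ≥ (0 : ℝ), φ.toFun t E = E)
    {t : ℕ → ℝ} {x : ℕ → X} {R : ℝ} (ht : ∀ᶠ n in atTop, t n ∈ Icc 0 R)
    (hx : Tendsto x atTop (𝓝 E)) : Tendsto (fun n => φ.toFun (t n) (x n)) atTop (𝓝 E) := by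
  refine tendsto_of_subseq_tendsto fun ns hns => ?_
  obtain ⟨m, hm, ψ, hψ, htm⟩ := isCompact_Icc.tendsto_subseq' (hns.eventually ht).frequently
  have hnsψ := hns.comp hψ.tendsto_atTop
  have hlim := φ.tendsto_toFun hm.1 htm ((hnsψ.eventually ht).mono fun _ hn => hn.1) (hx.comp hnsψ)
  rw [hE m hm.1] at hlim
  exact ⟨ψ, hlim⟩

theorem Invariant.toFun_mem {φ : Semiflow X} {M : Set X} (hM : φ.Invariant M) {x : X}
    (hx : x ∈ M) {t : ℝ} (ht : 0 ≤ t) : φ.toFun t x ∈ M :=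
  hM t ht ▸ mem_image_of_mem _ hx

theorem toFun_mem_basin {A : Set X} {x : X} (hx : x ∈ φ.basin A) {s : ℝ} (hs : 0 ≤ s) :
    φ.toFun s x ∈ φ.basin A := by
  refine (Tendsto.comp hx (tendsto_atTop_add_const_right _ s tendsto_id)).congr' ?_
  filter_upwards [eventually_ge_atTop 0] with t ht
  simp only [Function.comp, id, φ.map_add t s ht hs]

theorem Invariant.subset_basin {φ : Semiflow X} {A : Set X} (hA : φ.Invariant A) :
    A ⊆ φ.basin A := fun _ hx =>
  tendsto_const_nhds.congr' <| (eventually_ge_atTop 0).mono fun _ ht =>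
    (infDist_zero_of_mem (hA.toFun_mem hx ht)).symm

theorem omegaLimit_singleton_toFun_subset {t : ℝ} (ht : 0 ≤ t) (x : X) :
    φ.omegaLimit {φ.toFun t x} ⊆ φ.omegaLimit {x} := by
  rintro y ⟨z, s, hz, hs, hs_top, hlim⟩
  refine ⟨fun _ => x, fun n => s n + t, fun _ => rfl, fun n => add_nonneg (hs n) ht,
    tendsto_atTop_add_const_right _ t hs_top, hlim.congr fun n => ?_⟩
  rw [mem_singleton_iff.1 (hz n), φ.map_add _ _ (hs n) ht]

theorem toFun_mem_dualRepeller {𝒜 A : Set X} (h𝒜 : φ.Invariant 𝒜) {x : X}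
    (hx : x ∈ φ.dualRepeller 𝒜 A) {t : ℝ} (ht : 0 ≤ t) :
    φ.toFun t x ∈ φ.dualRepeller 𝒜 A :=
  ⟨h𝒜.toFun_mem hx.1 ht, eq_empty_of_subset_empty <|
    hx.2 ▸ inter_subset_inter_left A (φ.omegaLimit_singleton_toFun_subset ht x)⟩

namespace IsMorseDecomposition

variable {φ} {𝒜 : Set X} {l : ℕ} {M : ℕ → Set X}

theorem subset (hMD : φ.IsMorseDecomposition 𝒜 l M) {k : ℕ} (hk : 1 ≤ k) (hkl : k ≤ l) :
    M k ⊆ 𝒜 := by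
  obtain ⟨A, -, -, -, -, hM⟩ := hMD
  rw [hM k hk hkl]
  exact fun _ hx => hx.2.1

theorem toFun_mem (hMD : φ.IsMorseDecomposition 𝒜 l M) (h𝒜 : φ.Invariant 𝒜) {k : ℕ}
    (hk : 1 ≤ k) (hkl : k ≤ l) {x : X} (hx : x ∈ M k) {t : ℝ} (ht : 0 ≤ t) :
    φ.toFun t x ∈ M k := by
  obtain ⟨A, -, -, hA, -, hM⟩ := hMD
  rw [hM k hk hkl] at hx ⊢
  exact ⟨(hA k hk hkl).2.2.1.toFun_mem hx.1 ht, φ.toFun_mem_dualRepeller h𝒜 hx.2 ht⟩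

end IsMorseDecomposition

theorem IsMorseLyapunov.antitoneOn {φ : Semiflow X} {Ω 𝒜 : Set X} {l : ℕ} {M : ℕ → Set X}
    {V : X → ℝ} (hV : φ.IsMorseLyapunov Ω l M V) (hMD : φ.IsMorseDecomposition 𝒜 l M)
    (h𝒜 : φ.Invariant 𝒜) {x : X} (hx : x ∈ Ω) :
    AntitoneOn (fun t => V (φ.toFun t x)) (Ici 0) := by
  by_cases hR : x ∈ ⋃ k ∈ Icc 1 l, M k
  · obtain ⟨k, ⟨hk, hkl⟩, hxk⟩ := mem_iUnion₂.1 hR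
    obtain ⟨v, hv⟩ := hV.2.1 k hk hkl
    intro s hs t ht _
    dsimp only
    rw [hv _ (hMD.toFun_mem h𝒜 hk hkl hxk hs), hv _ (hMD.toFun_mem h𝒜 hk hkl hxk ht)]
  · exact (hV.2.2 x ⟨hx, hR⟩).antitoneOn

/-- The hypothesis that `V` has no generalized critical values in `(c, b]`, in the form used
by the deformation: `V` is a Lyapunov function on the forward invariant set `Ω`, strictly
decreasing along every orbit starting in `{c ≤ V ≤ b}` except at the equilibrium `E`. -/
structure IsLyapunovOnBand (Ω : Set X) (V : X → ℝ) (E : X) (c b : ℝ) : Prop where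
  toFun_mem : ∀ x ∈ Ω, ∀ t, 0 ≤ t → φ.toFun t x ∈ Ω
  continuousOn : ContinuousOn V Ω
  antitoneOn : ∀ x ∈ Ω, AntitoneOn (fun t => V (φ.toFun t x)) (Ici 0)
  strictAntiOn : ∀ x ∈ Ω, c ≤ V x → V x ≤ b → x ≠ E →
    StrictAntiOn (fun t => V (φ.toFun t x)) (Ici 0)
  toFun_eq : ∀ t ≥ (0 : ℝ), φ.toFun t E = E
  apply_eq : V E = c

theorem IsStrictMorseLyapunov.isLyapunovOnBand {φ : Semiflow X} {𝒜 : Set X} {l : ℕ} {M : ℕ → Set X}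
    {V : X → ℝ} {k₀ : ℕ} {E : X} {c b : ℝ} (hV : φ.IsStrictMorseLyapunov (φ.basin 𝒜) l M V)
    (hMD : φ.IsMorseDecomposition 𝒜 l M) (h𝒜 : φ.Invariant 𝒜) (hk₀ : 1 ≤ k₀) (hk₀l : k₀ ≤ l)
    (hME : M k₀ = {E}) (hE : ∀ t ≥ (0 : ℝ), φ.toFun t E = E) (hc : c = V E)
    (hcrit : ∀ k, 1 ≤ k → k ≤ l → ∀ x ∈ M k, V x ∉ Ioc c b) :
    φ.IsLyapunovOnBand (φ.basin 𝒜) V E c b where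
  toFun_mem _ hx _ ht := φ.toFun_mem_basin hx ht
  continuousOn := hV.1.1
  antitoneOn _ hx := hV.1.antitoneOn hMD h𝒜 hx
  strictAntiOn x hx hcx hxb hxE := by
    refine hV.1.2.2 x ⟨hx, fun hR => hxE ?_⟩
    obtain ⟨k, ⟨hk, hkl⟩, hxk⟩ := mem_iUnion₂.1 hR
    obtain ⟨cv, hcv, hmono⟩ := hV.2
    have hVx : V x = c := le_antisymm (not_lt.1 fun h => hcrit k hk hkl x hxk ⟨h, hxb⟩) hcx
    have hcv_eq : cv k = cv k₀ := by
      rw [← hcv k hk hkl x hxk, ← hcv k₀ hk₀ hk₀l E (hME ▸ rfl), hVx, hc]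
    obtain rfl : k = k₀ := by
      by_contra hne
      rcases lt_or_gt_of_ne hne with h | h
      · exact (hmono k k₀ hk h hk₀l).ne hcv_eq
      · exact (hmono k₀ k hk₀ h hkl).ne' hcv_eq
    rw [hME] at hxk
    exact hxk
  toFun_eq := hE
  apply_eq := hc.symm

namespace IsAttractor

variable {φ} {𝒜 : Set X}

theorem tendsto_infDist (h𝒜 : φ.IsAttractor 𝒜) {ι : Type*} {l : Filter ι} {x : ι → X} {x₀ : X}
    (hx₀ : x₀ ∈ φ.basin 𝒜) (hx : Tendsto x l (𝓝 x₀)) {t : ι → ℝ} (ht : Tendsto t l atTop) :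
    Tendsto (fun i => infDist (φ.toFun (t i) (x i)) 𝒜) l (𝓝 0) := by
  rcases 𝒜.eq_empty_or_nonempty with rfl | hne
  · simp only [infDist_empty, tendsto_const_nhds]
  obtain ⟨hK, -, U, hU, hatt⟩ := h𝒜
  obtain ⟨δ, hδ, hδU⟩ := hK.exists_thickening_subset_open isOpen_interior hU
  obtain ⟨T, hTδ, hT0⟩ := ((hx₀.eventually (gt_mem_nhds hδ)).and (eventually_ge_atTop 0)).exists
  have hU' : ∀ᶠ i in l, φ.toFun T (x i) ∈ U := by
    have := ((continuous_infDist_pt 𝒜).tendsto _).comp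
      (φ.tendsto_toFun hT0 tendsto_const_nhds (.of_forall fun _ => hT0) hx)
    filter_upwards [this.eventually (gt_mem_nhds hTδ)] with i hi
    exact interior_subset (hδU ((mem_thickening_iff_infDist_lt hne).2 hi))
  refine tendsto_order.2 ⟨fun a ha => .of_forall fun _ => ha.trans_le infDist_nonneg,
    fun ε hε => ?_⟩
  obtain ⟨T₁, hT₁, hattT₁⟩ := hatt ε hε
  filter_upwards [hU', ht.eventually_gt_atTop (T + T₁)] with i hiU hit
  rw [φ.toFun_eq_toFun_sub hT0 (by linarith) (x i)]
  exact hattT₁ _ (by linarith) _ hiU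

theorem isBounded_range (h𝒜 : φ.IsAttractor 𝒜) (hne : 𝒜.Nonempty) {x : ℕ → X} {x₀ : X}
    (hx₀ : x₀ ∈ φ.basin 𝒜) (hx : Tendsto x atTop (𝓝 x₀)) {t : ℕ → ℝ}
    (ht : Tendsto t atTop atTop) : IsBounded (range fun n => φ.toFun (t n) (x n)) := by
  obtain ⟨N, hN⟩ := eventually_atTop.1 ((h𝒜.tendsto_infDist hx₀ hx ht).eventually
    (gt_mem_nhds one_pos))
  refine (((finite_Iio N).image fun n => φ.toFun (t n) (x n)).isBounded.union
    (h𝒜.1.isBounded.thickening (δ := 1))).subset ?_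
  rintro _ ⟨n, rfl⟩
  rcases lt_or_ge n N with hn | hn
  · exact Or.inl ⟨n, hn, rfl⟩
  · exact Or.inr ((mem_thickening_iff_infDist_lt hne).2 (hN n hn))

theorem isCompact_closure_range (h𝒜 : φ.IsAttractor 𝒜) (hac : φ.AsympCompact)
    (hne : 𝒜.Nonempty) {x : ℕ → X} {x₀ : X} (hx₀ : x₀ ∈ φ.basin 𝒜)
    (hx : Tendsto x atTop (𝓝 x₀)) {t : ℕ → ℝ} (ht0 : ∀ n, 0 ≤ t n)
    (ht : Tendsto t atTop atTop) : IsCompact (closure (range fun n => φ.toFun (t n) (x n))) := by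
  refine isCompact_closure_of_forall_exists_subseq fun u hu => ?_
  choose k hk using hu
  by_cases hk_top : Tendsto k atTop atTop
  · obtain ⟨y, ψ, hψ, hy⟩ := hac (x ∘ k) (t ∘ k) (fun n => ht0 _)
      ((isBounded_range_of_tendsto x hx).subset (range_comp_subset_range k x)) (ht.comp hk_top)
      ((h𝒜.isBounded_range hne hx₀ hx ht).subset
        (range_comp_subset_range k fun n => φ.toFun (t n) (x n)))
    exact ⟨y, ψ, hψ, hy.congr fun n => hk _⟩
  · obtain ⟨N, hN⟩ : ∃ N, ∃ᶠ n in atTop, k n < N := by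
      simpa only [Filter.tendsto_atTop, not_forall, not_eventually, not_le] using hk_top
    obtain ⟨y, -, ψ, hψ, hy⟩ := ((finite_Iio N).image fun n => φ.toFun (t n) (x n)).isCompact
      |>.tendsto_subseq' (hN.mono fun n hn => ⟨k n, hn, hk n⟩)
    exact ⟨y, ψ, hψ, hy⟩

theorem exists_tendsto_ultrafilter (h𝒜 : φ.IsAttractor 𝒜) (hac : φ.AsympCompact)
    (hne : 𝒜.Nonempty) {x : ℕ → X} {x₀ : X} (hx₀ : x₀ ∈ φ.basin 𝒜)
    (hx : Tendsto x atTop (𝓝 x₀)) {t : ℕ → ℝ} (ht : Tendsto t atTop atTop)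
    (𝒰 : Ultrafilter ℕ) (h𝒰 : (𝒰 : Filter ℕ) ≤ atTop) :
    ∃ y ∈ 𝒜, Tendsto (fun n => φ.toFun (t n) (x n)) (𝒰 : Filter ℕ) (𝓝 y) := by
  have ht' : Tendsto (fun n => max (t n) 0) atTop atTop :=
    tendsto_atTop_mono (fun n => le_max_left _ _) ht
  obtain ⟨y, -, hy⟩ := (h𝒜.isCompact_closure_range hac hne hx₀ hx (fun n => le_max_right _ _)
    ht').ultrafilter_le_nhds (𝒰.map fun n => φ.toFun (max (t n) 0) (x n)) <| by
      rw [Ultrafilter.coe_map, le_principal_iff]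
      exact mem_map.2 (univ_mem' fun n => subset_closure ⟨n, rfl⟩)
  replace hy : Tendsto (fun n => φ.toFun (max (t n) 0) (x n)) (𝒰 : Filter ℕ) (𝓝 y) := by
    rwa [Ultrafilter.coe_map] at hy
  refine ⟨y, (h𝒜.1.isClosed.mem_iff_infDist_zero hne).2 <| tendsto_nhds_unique
    (((continuous_infDist_pt 𝒜).tendsto y).comp hy)
    ((h𝒜.tendsto_infDist hx₀ hx ht').mono_left h𝒰), hy.congr' ?_⟩
  exact h𝒰 <| (ht.eventually_ge_atTop 0).mono fun n hn => by simp only [max_eq_left hn]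

end IsAttractor

def hitTimes (V : X → ℝ) (c : ℝ) (x : X) : Set ℝ := {t | 0 ≤ t ∧ V (φ.toFun t x) ≤ c}

noncomputable def stopTime (V : X → ℝ) (c r : ℝ) (x : X) : ℝ :=
  sInf (insert r (φ.hitTimes V c x))

noncomputable def deformTime (V : X → ℝ) (c σ : ℝ) (x : X) : ℝ :=
  if σ < 1 then φ.stopTime V c (σ / (1 - σ)) x else sInf (φ.hitTimes V c x)

open Classical in
noncomputable def deform (V : X → ℝ) (c : ℝ) (E : X) (p : ℝ × X) : X :=
  if p.1 < 1 ∨ (φ.hitTimes V c p.2).Nonempty then φ.toFun (φ.deformTime V c p.1 p.2) p.2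
  else E

section Deformation

variable {V : X → ℝ} {c : ℝ} {E : X} {x : X} {r σ t : ℝ}

theorem bddBelow_hitTimes : BddBelow (φ.hitTimes V c x) := ⟨0, fun _ ht => ht.1⟩

theorem stopTime_le_left : φ.stopTime V c r x ≤ r :=
  csInf_le (φ.bddBelow_hitTimes.insert r) (mem_insert _ _)

theorem stopTime_le (ht : t ∈ φ.hitTimes V c x) : φ.stopTime V c r x ≤ t :=
  csInf_le (φ.bddBelow_hitTimes.insert r) (mem_insert_of_mem _ ht)

theorem stopTime_nonneg (hr : 0 ≤ r) : 0 ≤ φ.stopTime V c r x :=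
  le_csInf (insert_nonempty _ _) (by rintro t (rfl | ht); exacts [hr, ht.1])

theorem deformTime_nonneg (hσ : 0 ≤ σ) : 0 ≤ φ.deformTime V c σ x := by
  unfold deformTime
  split_ifs with hσ1
  · exact φ.stopTime_nonneg (div_nonneg hσ (sub_nonneg.2 hσ1.le))
  · exact Real.sInf_nonneg fun _ ht => ht.1

theorem deformTime_le (ht : t ∈ φ.hitTimes V c x) : φ.deformTime V c σ x ≤ t := by
  unfold deformTime
  split_ifs
  · exact φ.stopTime_le ht
  · exact csInf_le φ.bddBelow_hitTimes ht

theorem lt_apply_of_lt_deformTime (ht : 0 ≤ t) (hlt : t < φ.deformTime V c σ x) :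
    c < V (φ.toFun t x) :=
  not_le.1 fun hle => absurd hlt (not_lt.2 (φ.deformTime_le ⟨ht, hle⟩))

theorem deform_of_lt_one_or (h : σ < 1 ∨ (φ.hitTimes V c x).Nonempty) :
    φ.deform V c E (σ, x) = φ.toFun (φ.deformTime V c σ x) x :=
  if_pos h

theorem deform_of_lt_one (hσ : σ < 1) :
    φ.deform V c E (σ, x) = φ.toFun (φ.stopTime V c (σ / (1 - σ)) x) x := by
  rw [φ.deform_of_lt_one_or (.inl hσ), deformTime, if_pos hσ]

theorem deform_zero (x : X) : φ.deform V c E (0, x) = x := by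
  rw [φ.deform_of_lt_one one_pos, sub_zero, div_one,
    le_antisymm φ.stopTime_le_left (φ.stopTime_nonneg le_rfl), φ.map_zero]

theorem deform_of_apply_le (hσ : 0 ≤ σ) (hx : V x ≤ c) : φ.deform V c E (σ, x) = x := by
  have h0 : (0 : ℝ) ∈ φ.hitTimes V c x := ⟨le_rfl, by rwa [φ.map_zero]⟩
  rw [φ.deform_of_lt_one_or (.inr ⟨0, h0⟩),
    le_antisymm (φ.deformTime_le h0) (φ.deformTime_nonneg hσ), φ.map_zero]

end Deformation

namespace IsLyapunovOnBand

variable {φ} {Ω : Set X} {V : X → ℝ} {E : X} {c b : ℝ}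

theorem apply_toFun_le (h : φ.IsLyapunovOnBand Ω V E c b) {x : X} (hx : x ∈ Ω) {t : ℝ}
    (ht : 0 ≤ t) : V (φ.toFun t x) ≤ V x := by
  simpa only [φ.map_zero] using h.antitoneOn x hx self_mem_Ici ht ht

theorem tendsto_apply (h : φ.IsLyapunovOnBand Ω V E c b) {ι : Type*} {l : Filter ι}
    {x : ι → X} {x₀ : X} (hx : Tendsto x l (𝓝 x₀)) (hx₀ : x₀ ∈ Ω) (hxl : ∀ᶠ i in l, x i ∈ Ω) :
    Tendsto (fun i => V (x i)) l (𝓝 (V x₀)) :=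
  (h.continuousOn x₀ hx₀).tendsto.comp (tendsto_nhdsWithin_iff.2 ⟨hx, hxl⟩)

theorem tendsto_apply_toFun (h : φ.IsLyapunovOnBand Ω V E c b) {ι : Type*} {l : Filter ι}
    {t : ι → ℝ} {x : ι → X} {t₀ : ℝ} {x₀ : X} (ht₀ : 0 ≤ t₀) (ht : Tendsto t l (𝓝 t₀))
    (htl : ∀ᶠ i in l, 0 ≤ t i) (hx : Tendsto x l (𝓝 x₀)) (hx₀ : x₀ ∈ Ω)
    (hxl : ∀ᶠ i in l, x i ∈ Ω) :
    Tendsto (fun i => V (φ.toFun (t i) (x i))) l (𝓝 (V (φ.toFun t₀ x₀))) :=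
  h.tendsto_apply (φ.tendsto_toFun ht₀ ht htl hx) (h.toFun_mem x₀ hx₀ t₀ ht₀)
    ((htl.and hxl).mono fun _ hi => h.toFun_mem _ hi.2 _ hi.1)

theorem le_apply_toFun_of_tendsto (h : φ.IsLyapunovOnBand Ω V E c b) {ι : Type*}
    {l : Filter ι} [l.NeBot] {x : ι → X} {x₀ : X} (hx : Tendsto x l (𝓝 x₀)) (hx₀ : x₀ ∈ Ω)
    (hxl : ∀ᶠ i in l, x i ∈ Ω) {t : ℝ} (ht : 0 ≤ t)
    (hle : ∀ᶠ i in l, c ≤ V (φ.toFun t (x i))) : c ≤ V (φ.toFun t x₀) :=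
  ge_of_tendsto (h.tendsto_apply_toFun ht tendsto_const_nhds (.of_forall fun _ => ht) hx hx₀ hxl)
    hle

theorem eq_of_apply_le_apply_toFun (h : φ.IsLyapunovOnBand Ω V E c b) {y : X} (hy : y ∈ Ω)
    (hcy : c ≤ V y) (hyb : V y ≤ b) {s : ℝ} (hs : 0 < s) (hle : V y ≤ V (φ.toFun s y)) :
    y = E := by
  by_contra hyE
  have := h.strictAntiOn y hy hcy hyb hyE self_mem_Ici (mem_Ici.2 hs.le) hs
  simp only [φ.map_zero] at this
  linarith

theorem eq_of_backward_orbit (h : φ.IsLyapunovOnBand Ω V E c b) {K : Set X} (hK : IsCompact K)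
    (hKΩ : K ⊆ Ω) {γ : ℕ → X} (hγK : ∀ m, γ m ∈ K) (hγ : ∀ m, φ.toFun 1 (γ (m + 1)) = γ m)
    (hc : ∀ m, c ≤ V (γ m)) (hb : ∀ m, V (γ m) ≤ b) : γ 0 = E := by
  have hmono : Monotone fun m => V (γ m) := monotone_nat_of_le_succ fun m => by
    simpa only [hγ m] using h.apply_toFun_le (hKΩ (hγK (m + 1))) zero_le_one
  have hbdd : BddAbove (range fun m => V (γ m)) := ⟨b, forall_mem_range.2 hb⟩
  have hv := tendsto_atTop_ciSup hmono hbdd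
  obtain ⟨z, hzK, ψ, hψ, hz⟩ := hK.tendsto_subseq hγK
  have hVz : V z = ⨆ m, V (γ m) := tendsto_nhds_unique
    (h.tendsto_apply hz (hKΩ hzK) (.of_forall fun _ => hKΩ (hγK _))) (hv.comp hψ.tendsto_atTop)
  have h1z : Tendsto (fun n => γ (ψ n - 1)) atTop (𝓝 (φ.toFun 1 z)) := by
    refine (φ.tendsto_toFun zero_le_one tendsto_const_nhds (.of_forall fun _ => zero_le_one)
      hz).congr' ?_
    filter_upwards [eventually_ge_atTop 1] with n hn
    have := hγ (ψ n - 1)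
    rw [Nat.sub_add_cancel (hn.trans hψ.le_apply)] at this
    exact this
  have hV1z : V (φ.toFun 1 z) = ⨆ m, V (γ m) := tendsto_nhds_unique
    (h.tendsto_apply h1z (hKΩ (hK.isClosed.mem_of_tendsto h1z (.of_forall fun _ => hγK _)))
      (.of_forall fun _ => hKΩ (hγK _)))
    (hv.comp ((tendsto_sub_atTop_nat 1).comp hψ.tendsto_atTop))
  -- `z` is a rest point of `V` in the band, so it is `E` and `V ∘ γ` is constant `c`
  have hzE : z = E := h.eq_of_apply_le_apply_toFun (hKΩ hzK)
    (hVz ▸ (hc 0).trans (le_ciSup hbdd 0)) (hVz ▸ ciSup_le hb) one_pos (by rw [hVz, hV1z])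
  have hγc : ∀ m, V (γ m) = c := fun m =>
    le_antisymm ((le_ciSup hbdd m).trans_eq (by rw [← hVz, hzE, h.apply_eq])) (hc m)
  have hγ1 : γ 1 = E := h.eq_of_apply_le_apply_toFun (hKΩ (hγK 1)) (hc 1) (hb 1) one_pos
    (by rw [hγ 0, hγc, hγc])
  rw [← hγ 0, hγ1, h.toFun_eq 1 zero_le_one]

theorem tendsto_toFun_of_le_apply {𝒜 : Set X} (h : φ.IsLyapunovOnBand (φ.basin 𝒜) V E c b)
    (hac : φ.AsympCompact) (h𝒜 : φ.IsAttractor 𝒜) (hE : E ∈ 𝒜) {x₀ : X}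
    (hx₀ : x₀ ∈ φ.basin 𝒜) {x : ℕ → X} (hx : Tendsto x atTop (𝓝 x₀))
    (hxΩ : ∀ n, x n ∈ φ.basin 𝒜) (hxb : ∀ n, V (x n) ≤ b) {s : ℕ → ℝ}
    (hs : Tendsto s atTop atTop) (hge : ∀ n, ∀ u ∈ Ico 0 (s n), c ≤ V (φ.toFun u (x n))) :
    Tendsto (fun n => φ.toFun (s n) (x n)) atTop (𝓝 E) := by
  rw [tendsto_iff_ultrafilter]
  intro 𝒰 h𝒰
  have hΩ : 𝒜 ⊆ φ.basin 𝒜 := h𝒜.2.1.subset_basin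
  have hsm : ∀ m : ℕ, Tendsto (fun n => s n - m) atTop atTop := fun m => by
    simpa only [sub_eq_add_neg] using tendsto_atTop_add_const_right _ (-(m : ℝ)) hs
  choose γ hγ𝒜 hγ using fun m : ℕ =>
    h𝒜.exists_tendsto_ultrafilter hac ⟨E, hE⟩ hx₀ hx (hsm m) 𝒰 h𝒰
  have hlarge : ∀ m : ℕ, ∀ᶠ n in (𝒰 : Filter ℕ), (m : ℝ) + 1 ≤ s n :=
    fun m => h𝒰 (hs.eventually_ge_atTop _)
  have hband : ∀ m : ℕ, c ≤ V (γ (m + 1)) ∧ V (γ (m + 1)) ≤ b := by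
    intro m
    have hlim := h.tendsto_apply (hγ (m + 1)) (hΩ (hγ𝒜 _))
      ((hlarge m).mono fun n hn => h.toFun_mem _ (hxΩ n) _ (by push_cast; linarith))
    refine ⟨ge_of_tendsto hlim ((hlarge m).mono fun n hn => hge n _ ⟨?_, ?_⟩),
      le_of_tendsto hlim ((hlarge m).mono fun n hn => ?_)⟩
    · push_cast; linarith
    · push_cast; linarith
    · exact (h.apply_toFun_le (hxΩ n) (by push_cast; linarith)).trans (hxb n)
  have hstep : ∀ m : ℕ, φ.toFun 1 (γ (m + 1)) = γ m := by
    intro m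
    refine tendsto_nhds_unique ((φ.tendsto_toFun zero_le_one tendsto_const_nhds
      (.of_forall fun _ => zero_le_one) (hγ (m + 1))).congr' ?_) (hγ m)
    filter_upwards [hlarge m] with n hn
    rw [← φ.map_add 1 _ zero_le_one (by push_cast; linarith)]
    push_cast
    ring_nf
  have hγ1 : γ 1 = E := h.eq_of_backward_orbit h𝒜.1 hΩ (fun m => hγ𝒜 (m + 1))
    (fun m => hstep (m + 1)) (fun m => (hband m).1) (fun m => (hband m).2)
  have hγ0 : γ 0 = E := by rw [← hstep 0, zero_add, hγ1, h.toFun_eq 1 zero_le_one]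
  simpa only [hγ0, Nat.cast_zero, sub_zero] using hγ 0

variable {x : X} {r σ : ℝ}

theorem isClosed_hitTimes (h : φ.IsLyapunovOnBand Ω V E c b) (hx : x ∈ Ω) :
    IsClosed (φ.hitTimes V c x) :=
  (h.continuousOn.comp (φ.continuousOn_orbit x) fun t ht => h.toFun_mem x hx t ht)
    |>.preimage_isClosed_of_isClosed isClosed_Ici isClosed_Iic

theorem stopTime_mem (h : φ.IsLyapunovOnBand Ω V E c b) (hx : x ∈ Ω) (r : ℝ) :
    φ.stopTime V c r x ∈ insert r (φ.hitTimes V c x) := by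
  refine IsClosed.csInf_mem ?_ (insert_nonempty _ _) (φ.bddBelow_hitTimes.insert r)
  rw [insert_eq]
  exact isClosed_singleton.union (h.isClosed_hitTimes hx)

theorem lt_stopTime (h : φ.IsLyapunovOnBand Ω V E c b) (hx : x ∈ Ω) {a : ℝ} (har : a < r)
    (hat : ∀ t ∈ φ.hitTimes V c x, a < t) : a < φ.stopTime V c r x := by
  rcases h.stopTime_mem hx r with hr | ht
  · rwa [hr]
  · exact hat _ ht

theorem deformTime_mem (h : φ.IsLyapunovOnBand Ω V E c b) (hx : x ∈ Ω)
    (hσx : σ < 1 ∨ (φ.hitTimes V c x).Nonempty)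
    (hlt : σ < 1 → φ.deformTime V c σ x < σ / (1 - σ)) :
    φ.deformTime V c σ x ∈ φ.hitTimes V c x := by
  by_cases hσ : σ < 1
  · have hlt := hlt hσ
    rw [deformTime, if_pos hσ] at hlt ⊢
    exact (h.stopTime_mem hx _).resolve_left hlt.ne
  · rw [deformTime, if_neg hσ]
    exact (h.isClosed_hitTimes hx).csInf_mem (hσx.resolve_left hσ) φ.bddBelow_hitTimes

theorem exists_apply_toFun_lt (h : φ.IsLyapunovOnBand Ω V E c b) (hx : x ∈ Ω) (hxb : V x ≤ b)
    (hxE : x ≠ E) {t₀ a : ℝ} (ht₀ : t₀ ∈ φ.hitTimes V c x) (ha : t₀ < a) :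
    ∃ t, 0 ≤ t ∧ t < a ∧ V (φ.toFun t x) < c := by
  rcases lt_or_ge (V x) c with hxc | hcx
  · exact ⟨0, le_rfl, ht₀.1.trans_lt ha, by rwa [φ.map_zero]⟩
  · refine ⟨(t₀ + a) / 2, by linarith [ht₀.1], by linarith, ?_⟩
    exact (h.strictAntiOn x hx hcx hxb hxE ht₀.1 (mem_Ici.2 (by linarith [ht₀.1]))
      (by linarith)).trans_le ht₀.2

theorem tendsto_stopTime (h : φ.IsLyapunovOnBand Ω V E c b) {x₀ : X} (hx₀ : x₀ ∈ Ω)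
    (hx₀b : V x₀ ≤ b) (hx₀E : x₀ ≠ E) {ι : Type*} {l : Filter ι} {r : ι → ℝ} {x : ι → X}
    {r₀ : ℝ} (hr : Tendsto r l (𝓝 r₀)) (hx : Tendsto x l (𝓝 x₀)) (hxl : ∀ᶠ i in l, x i ∈ Ω) :
    Tendsto (fun i => φ.stopTime V c (r i) (x i)) l (𝓝 (φ.stopTime V c r₀ x₀)) := by
  have hV : ∀ {t}, 0 ≤ t → Tendsto (fun i => V (φ.toFun t (x i))) l (𝓝 (V (φ.toFun t x₀))) :=
    fun ht => h.tendsto_apply_toFun ht tendsto_const_nhds (.of_forall fun _ => ht) hx hx₀ hxl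
  refine tendsto_order.2 ⟨fun a ha => ?_, fun a ha => ?_⟩
  · have har : ∀ᶠ i in l, a < r i := hr.eventually (lt_mem_nhds (ha.trans_le φ.stopTime_le_left))
    rcases lt_or_ge a 0 with ha0 | ha0
    · filter_upwards [har, hxl] with i hir hiΩ
      exact h.lt_stopTime hiΩ hir fun t ht => ha0.trans_le ht.1
    · have hca : c < V (φ.toFun a x₀) :=
        not_le.1 fun hle => absurd ha (not_lt.2 (φ.stopTime_le ⟨ha0, hle⟩))
      filter_upwards [har, hxl, (hV ha0).eventually (lt_mem_nhds hca)] with i hir hiΩ hic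
      refine h.lt_stopTime hiΩ hir fun t ht => not_le.1 fun hta => ?_
      exact absurd ht.2 (not_le.2 (hic.trans_le (h.antitoneOn _ hiΩ ht.1 ha0 hta)))
  · rcases lt_or_ge r₀ a with hra | hra
    · filter_upwards [hr.eventually (gt_mem_nhds hra)] with i hi
      exact φ.stopTime_le_left.trans_lt hi
    · have hmem : φ.stopTime V c r₀ x₀ ∈ φ.hitTimes V c x₀ :=
        (h.stopTime_mem hx₀ r₀).resolve_left (ha.trans_le hra).ne
      obtain ⟨t, ht0, hta, htc⟩ := h.exists_apply_toFun_lt hx₀ hx₀b hx₀E hmem ha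
      filter_upwards [(hV ht0).eventually (gt_mem_nhds htc)] with i hi
      exact (φ.stopTime_le ⟨ht0, hi.le⟩).trans_lt hta

theorem deform_mem (h : φ.IsLyapunovOnBand Ω V E c b) (hEΩ : E ∈ Ω) (hcb : c ≤ b)
    (hσ : 0 ≤ σ) (hx : x ∈ Ω) (hxb : V x ≤ b) : φ.deform V c E (σ, x) ∈ {y ∈ Ω | V y ≤ b} := by
  unfold deform
  split_ifs
  · exact ⟨h.toFun_mem x hx _ (φ.deformTime_nonneg hσ),
      (h.apply_toFun_le hx (φ.deformTime_nonneg hσ)).trans hxb⟩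
  · exact ⟨hEΩ, h.apply_eq.trans_le hcb⟩

theorem deform_one_mem (h : φ.IsLyapunovOnBand Ω V E c b) (hEΩ : E ∈ Ω) (hx : x ∈ Ω) :
    φ.deform V c E (1, x) ∈ {y ∈ Ω | V y ≤ c} := by
  by_cases hne : (φ.hitTimes V c x).Nonempty
  · rw [φ.deform_of_lt_one_or (.inr hne)]
    obtain ⟨hτ0, hτ⟩ := h.deformTime_mem hx (.inr hne) fun h1 => absurd h1 (lt_irrefl 1)
    exact ⟨h.toFun_mem x hx _ hτ0, hτ⟩
  · rw [deform, if_neg (by simp only [lt_irrefl, hne, or_self, not_false_eq_true])]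
    exact ⟨hEΩ, h.apply_eq.le⟩

theorem deform_one_of_forall_le (h : φ.IsLyapunovOnBand Ω V E c b) (hx : x ∈ Ω)
    (hxb : V x ≤ b) (hge : ∀ t, 0 ≤ t → c ≤ V (φ.toFun t x)) : φ.deform V c E (1, x) = E := by
  by_cases hne : (φ.hitTimes V c x).Nonempty
  · rw [φ.deform_of_lt_one_or (.inr hne)]
    obtain ⟨hτ0, hτ⟩ := h.deformTime_mem hx (.inr hne) fun h1 => absurd h1 (lt_irrefl 1)
    refine h.eq_of_apply_le_apply_toFun (h.toFun_mem x hx _ hτ0) (hge _ hτ0)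
      ((h.apply_toFun_le hx hτ0).trans hxb) one_pos ?_
    rw [← φ.map_add 1 _ zero_le_one hτ0]
    exact hτ.trans (hge _ (by positivity))
  · rw [deform, if_neg (by simp only [lt_irrefl, hne, or_self, not_false_eq_true])]

theorem deform_one_of_apply_le (h : φ.IsLyapunovOnBand Ω V E c b) (hx : x ∈ Ω)
    (hxb : V x ≤ b) {m : ℝ} (hm : 0 ≤ m) (hge : ∀ t ∈ Ico 0 m, c ≤ V (φ.toFun t x))
    (hle : V (φ.toFun m x) ≤ c) : φ.deform V c E (1, x) = φ.toFun m x := by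
  have hmhit : m ∈ φ.hitTimes V c x := ⟨hm, hle⟩
  have hτ := h.deformTime_mem hx (.inr ⟨m, hmhit⟩) fun h1 => absurd h1 (lt_irrefl 1)
  have hτm := φ.deformTime_le (σ := 1) hmhit
  rw [φ.deform_of_lt_one_or (.inr ⟨m, hmhit⟩)]
  generalize φ.deformTime V c 1 x = τ at hτ hτm ⊢
  obtain ⟨hτ0, hτc⟩ := hτ
  rcases hτm.lt_or_eq with hτm | rfl
  · have hVτ : V (φ.toFun τ x) = c := le_antisymm hτc (hge τ ⟨hτ0, hτm⟩)
    -- the orbit stays at level `c` between `τ` and `m`, so it sits at the rest point `E`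
    have hyE : φ.toFun τ x = E := by
      refine h.eq_of_apply_le_apply_toFun (h.toFun_mem x hx τ hτ0) hVτ.ge
        ((h.apply_toFun_le hx hτ0).trans hxb) (sub_pos.2 (left_lt_add_div_two.2 hτm)) ?_
      rw [← φ.toFun_eq_toFun_sub hτ0 (left_lt_add_div_two.2 hτm).le, hVτ]
      exact hge _ ⟨by linarith, add_div_two_lt_right.2 hτm⟩
    rw [φ.toFun_eq_toFun_sub hτ0 hτm.le, hyE, h.toFun_eq _ (sub_nonneg.2 hτm.le)]
  · rfl

variable {𝒜 : Set X}

theorem tendsto_deform_of_lt_one (h : φ.IsLyapunovOnBand Ω V E c b) {σ₀ : ℝ} {x₀ : X}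
    (hσ₀ : σ₀ < 1) (hx₀ : x₀ ∈ Ω) (hx₀b : V x₀ ≤ b) {σ : ℕ → ℝ} {x : ℕ → X}
    (hσ0 : ∀ n, 0 ≤ σ n) (hσ : Tendsto σ atTop (𝓝 σ₀)) (hx : Tendsto x atTop (𝓝 x₀))
    (hxΩ : ∀ n, x n ∈ Ω) :
    Tendsto (fun n => φ.deform V c E (σ n, x n)) atTop (𝓝 (φ.deform V c E (σ₀, x₀))) := by
  have hr : Tendsto (fun n => σ n / (1 - σ n)) atTop (𝓝 (σ₀ / (1 - σ₀))) :=
    hσ.div (tendsto_const_nhds.sub hσ) (sub_ne_zero.2 hσ₀.ne')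
  have hlt : ∀ᶠ n in atTop, σ n < 1 := hσ.eventually (gt_mem_nhds hσ₀)
  have hθ0 : ∀ᶠ n in atTop, 0 ≤ φ.stopTime V c (σ n / (1 - σ n)) (x n) :=
    hlt.mono fun n hn => φ.stopTime_nonneg (div_nonneg (hσ0 n) (sub_nonneg.2 hn.le))
  have hr₀ : 0 ≤ σ₀ / (1 - σ₀) := div_nonneg (ge_of_tendsto' hσ hσ0) (sub_nonneg.2 hσ₀.le)
  rw [φ.deform_of_lt_one hσ₀]
  refine Tendsto.congr' (hlt.mono fun n hn => (φ.deform_of_lt_one hn).symm) ?_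
  rcases eq_or_ne x₀ E with rfl | hx₀E
  · rw [h.toFun_eq _ (φ.stopTime_nonneg hr₀)]
    refine φ.tendsto_toFun_of_isFixed h.toFun_eq (R := σ₀ / (1 - σ₀) + 1) ?_ hx
    filter_upwards [hθ0, hr.eventually (gt_mem_nhds (lt_add_one _))] with n hn hrn
    exact ⟨hn, φ.stopTime_le_left.trans hrn.le⟩
  · exact φ.tendsto_toFun (φ.stopTime_nonneg hr₀)
      (h.tendsto_stopTime hx₀ hx₀b hx₀E hr hx (.of_forall hxΩ)) hθ0 hx

theorem tendsto_deform_one_of_tendsto_atTop (h : φ.IsLyapunovOnBand (φ.basin 𝒜) V E c b)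
    (hac : φ.AsympCompact) (h𝒜 : φ.IsAttractor 𝒜) (hE : E ∈ 𝒜) {x₀ : X}
    (hx₀ : x₀ ∈ φ.basin 𝒜) (hx₀b : V x₀ ≤ b) {σ : ℕ → ℝ} {x : ℕ → X}
    (hx : Tendsto x atTop (𝓝 x₀)) (hxΩ : ∀ n, x n ∈ φ.basin 𝒜) (hxb : ∀ n, V (x n) ≤ b)
    (hσx : ∀ᶠ n in atTop, σ n < 1 ∨ (φ.hitTimes V c (x n)).Nonempty)
    (hT : Tendsto (fun n => φ.deformTime V c (σ n) (x n)) atTop atTop) :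
    Tendsto (fun n => φ.deform V c E (σ n, x n)) atTop (𝓝 (φ.deform V c E (1, x₀))) := by
  have hge : ∀ n, ∀ u ∈ Ico 0 (φ.deformTime V c (σ n) (x n)), c ≤ V (φ.toFun u (x n)) :=
    fun n u hu => (φ.lt_apply_of_lt_deformTime hu.1 hu.2).le
  rw [h.deform_one_of_forall_le hx₀ hx₀b fun t ht => h.le_apply_toFun_of_tendsto hx hx₀
    (.of_forall hxΩ) ht ((hT.eventually_gt_atTop t).mono fun n hn => hge n t ⟨ht, hn⟩)]
  exact (h.tendsto_toFun_of_le_apply hac h𝒜 hE hx₀ hx hxΩ hxb hT hge).congr'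
    (hσx.mono fun n hn => (φ.deform_of_lt_one_or hn).symm)

theorem tendsto_deform_one_of_tendsto (h : φ.IsLyapunovOnBand Ω V E c b) {x₀ : X}
    (hx₀ : x₀ ∈ Ω) (hx₀b : V x₀ ≤ b) {σ : ℕ → ℝ} {x : ℕ → X} (hσ0 : ∀ n, 0 ≤ σ n)
    (hσ : Tendsto σ atTop (𝓝 1)) (hx : Tendsto x atTop (𝓝 x₀)) (hxΩ : ∀ n, x n ∈ Ω)
    (hσx : ∀ᶠ n in atTop, σ n < 1 ∨ (φ.hitTimes V c (x n)).Nonempty) {m : ℝ}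
    (hT : Tendsto (fun n => φ.deformTime V c (σ n) (x n)) atTop (𝓝 m)) :
    Tendsto (fun n => φ.deform V c E (σ n, x n)) atTop (𝓝 (φ.deform V c E (1, x₀))) := by
  have hT0 : ∀ n, 0 ≤ φ.deformTime V c (σ n) (x n) := fun n => φ.deformTime_nonneg (hσ0 n)
  have hm : 0 ≤ m := ge_of_tendsto' hT hT0
  -- for `σ` close to `1` the clock `σ / (1 - σ)` exceeds `m + 1`, so the flow stopped at level `c`
  have hhit : ∀ᶠ n in atTop, φ.deformTime V c (σ n) (x n) ∈ φ.hitTimes V c (x n) := by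
    have hB : ∀ᶠ n in atTop, m + 1 < σ n * (m + 2) :=
      (hσ.mul_const (m + 2)).eventually (lt_mem_nhds (by linarith))
    filter_upwards [hσx, hB, hT.eventually (gt_mem_nhds (lt_add_one m))] with n hn hnB hnT
    refine h.deformTime_mem (hxΩ n) hn fun hσ1 => hnT.trans ?_
    rw [lt_div_iff₀ (sub_pos.2 hσ1)]
    linarith
  have hle : V (φ.toFun m x₀) ≤ c := le_of_tendsto
    (h.tendsto_apply_toFun hm hT (.of_forall hT0) hx hx₀ (.of_forall hxΩ))
    (hhit.mono fun _ hn => hn.2)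
  rw [h.deform_one_of_apply_le hx₀ hx₀b hm (fun t ht => h.le_apply_toFun_of_tendsto hx hx₀
    (.of_forall hxΩ) ht.1 ((hT.eventually (lt_mem_nhds ht.2)).mono fun n hn =>
      (φ.lt_apply_of_lt_deformTime ht.1 hn).le)) hle]
  exact (φ.tendsto_toFun hm hT (.of_forall hT0) hx).congr'
    (hσx.mono fun n hn => (φ.deform_of_lt_one_or hn).symm)

theorem tendsto_deform_one (h : φ.IsLyapunovOnBand (φ.basin 𝒜) V E c b)
    (hac : φ.AsympCompact) (h𝒜 : φ.IsAttractor 𝒜) (hE : E ∈ 𝒜) {x₀ : X}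
    (hx₀ : x₀ ∈ φ.basin 𝒜) (hx₀b : V x₀ ≤ b) {σ : ℕ → ℝ} {x : ℕ → X} (hσ0 : ∀ n, 0 ≤ σ n)
    (hσ : Tendsto σ atTop (𝓝 1)) (hx : Tendsto x atTop (𝓝 x₀))
    (hxΩ : ∀ n, x n ∈ φ.basin 𝒜) (hxb : ∀ n, V (x n) ≤ b) :
    Tendsto (fun n => φ.deform V c E (σ n, x n)) atTop (𝓝 (φ.deform V c E (1, x₀))) := by
  refine tendsto_of_subseq_tendsto fun ns hns => ?_
  by_cases hfreq : ∃ᶠ n in atTop, ¬(σ (ns n) < 1 ∨ (φ.hitTimes V c (x (ns n))).Nonempty)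
  · obtain ⟨ψ, hψ, hψE⟩ := extraction_of_frequently_atTop hfreq
    refine ⟨ψ, ?_⟩
    have hge : ∀ t, 0 ≤ t → c ≤ V (φ.toFun t x₀) := fun t ht =>
      h.le_apply_toFun_of_tendsto (hx.comp (hns.comp hψ.tendsto_atTop)) hx₀ (.of_forall fun _ =>
        hxΩ _) ht (.of_forall fun n => not_lt.1 fun hlt => hψE n (.inr ⟨t, ht, hlt.le⟩))
    rw [h.deform_one_of_forall_le hx₀ hx₀b hge]
    exact tendsto_const_nhds.congr fun n => (if_neg (hψE n)).symm
  rw [not_frequently] at hfreq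
  simp only [not_not] at hfreq
  by_cases hT : Tendsto (fun n => φ.deformTime V c (σ (ns n)) (x (ns n))) atTop atTop
  · exact ⟨id, h.tendsto_deform_one_of_tendsto_atTop hac h𝒜 hE hx₀ hx₀b (hx.comp hns)
      (fun _ => hxΩ _) (fun _ => hxb _) hfreq hT⟩
  obtain ⟨B, hB⟩ : ∃ B, ∃ᶠ n in atTop, φ.deformTime V c (σ (ns n)) (x (ns n)) < B := by
    simpa only [Filter.tendsto_atTop, not_forall, not_eventually, not_le] using hT
  obtain ⟨m, -, ψ, hψ, hm⟩ := (isCompact_Icc (a := 0) (b := B)).tendsto_subseq'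
    (hB.mono fun n hn => ⟨φ.deformTime_nonneg (hσ0 _), hn.le⟩)
  exact ⟨ψ, h.tendsto_deform_one_of_tendsto hx₀ hx₀b (fun _ => hσ0 _)
    (hσ.comp (hns.comp hψ.tendsto_atTop)) (hx.comp (hns.comp hψ.tendsto_atTop)) (fun _ => hxΩ _)
    (hψ.tendsto_atTop.eventually hfreq) hm⟩

theorem continuousOn_deform (h : φ.IsLyapunovOnBand (φ.basin 𝒜) V E c b)
    (hac : φ.AsympCompact) (h𝒜 : φ.IsAttractor 𝒜) (hE : E ∈ 𝒜) :
    ContinuousOn (φ.deform V c E) (Icc 0 1 ×ˢ {x ∈ φ.basin 𝒜 | V x ≤ b}) := by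
  rintro ⟨σ₀, x₀⟩ ⟨hσ₀, hx₀, hx₀b⟩
  rw [ContinuousWithinAt, tendsto_iff_seq_tendsto]
  intro p hp
  obtain ⟨hp_lim, hp_mem⟩ := tendsto_nhdsWithin_iff.1 hp
  obtain ⟨N, hN⟩ := eventually_atTop.1 hp_mem
  rw [← tendsto_add_atTop_iff_nat N]
  have hmem : ∀ n, p (n + N) ∈ Icc 0 1 ×ˢ {x ∈ φ.basin 𝒜 | V x ≤ b} :=
    fun n => hN _ (Nat.le_add_left N n)
  have hpN := hp_lim.comp (tendsto_add_atTop_nat N)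
  have hσ := (continuous_fst.tendsto _).comp hpN
  have hx := (continuous_snd.tendsto _).comp hpN
  rcases hσ₀.2.lt_or_eq with hσ₀1 | rfl
  · exact h.tendsto_deform_of_lt_one hσ₀1 hx₀ hx₀b (fun n => (hmem n).1.1) hσ hx
      fun n => (hmem n).2.1
  · exact h.tendsto_deform_one hac h𝒜 hE hx₀ hx₀b (fun n => (hmem n).1.1) hσ hx
      (fun n => (hmem n).2.1) fun n => (hmem n).2.2

theorem isStrongDeformationRetract (h : φ.IsLyapunovOnBand (φ.basin 𝒜) V E c b)
    (hac : φ.AsympCompact) (h𝒜 : φ.IsAttractor 𝒜) (hE : E ∈ 𝒜) (hcb : c ≤ b) :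
    IsStrongDeformationRetract {x ∈ φ.basin 𝒜 | V x ≤ c} {x ∈ φ.basin 𝒜 | V x ≤ b} := by
  have hEΩ : E ∈ φ.basin 𝒜 := h𝒜.2.1.subset_basin hE
  exact ⟨fun x hx => ⟨hx.1, hx.2.trans hcb⟩, φ.deform V c E, h.continuousOn_deform hac h𝒜 hE,
    fun x _ => φ.deform_zero x, fun x hx => h.deform_one_mem hEΩ hx.1,
    fun σ hσ x hx => φ.deform_of_apply_le hσ.1 hx.2,
    fun σ hσ x hx => h.deform_mem hEΩ hcb hσ.1 hx.1 hx.2⟩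

end IsLyapunovOnBand

end Semiflow

theorem stmt19_general {X : Type*} [MetricSpace X] (φ : Semiflow X)
    (hac : φ.AsympCompact) (𝒜 : Set X) (h𝒜 : φ.IsAttractor 𝒜)
    (l : ℕ) (M : ℕ → Set X) (hMD : φ.IsMorseDecomposition 𝒜 l M)
    (V : X → ℝ) (hV : φ.IsStrictMorseLyapunov (φ.basin 𝒜) l M V)
    (k₀ : ℕ) (hk₀ : 1 ≤ k₀ ∧ k₀ ≤ l) (E : X)
    (hME : M k₀ = {E}) (hEq : ∀ t ≥ (0:ℝ), φ.toFun t E = E)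
    (c : ℝ) (hc : c = V E) (b : ℝ) (hb : c < b)
    (hcrit : ∀ k, 1 ≤ k → k ≤ l → ∀ x ∈ M k, V x ∉ Set.Ioc c b) :
    IsStrongDeformationRetract {x ∈ φ.basin 𝒜 | V x ≤ c} {x ∈ φ.basin 𝒜 | V x ≤ b} :=
  (hV.isLyapunovOnBand hMD h𝒜.2.1 hk₀.1 hk₀.2 hME hEq hc hcrit).isStrongDeformationRetract hac
    h𝒜 (hMD.subset hk₀.1 hk₀.2 (hME ▸ rfl)) hb.le

/-- Second Deformation Lemma: if the Morse set `M k₀` consists of exactly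
one equilibrium `E`, `c = V E`, and the strict Morse–Lyapunov function `V` has no
generalized critical values in `(c,b]`, then `V_c` is a strong deformation retract
of `V_b`. -/
theorem stmt19 {X : Type*} [MetricSpace X] [CompleteSpace X] (φ : Semiflow X)
    (hac : φ.AsympCompact) (𝒜 : Set X) (h𝒜 : φ.IsAttractor 𝒜)
    (l : ℕ) (hl : 1 ≤ l) (M : ℕ → Set X) (hMD : φ.IsMorseDecomposition 𝒜 l M)
    (V : X → ℝ) (hV : φ.IsStrictMorseLyapunov (φ.basin 𝒜) l M V)
    (k₀ : ℕ) (hk₀ : 1 ≤ k₀ ∧ k₀ ≤ l) (E : X)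
    (hME : M k₀ = {E}) (hEq : ∀ t ≥ (0:ℝ), φ.toFun t E = E)
    (c : ℝ) (hc : c = V E) (b : ℝ) (hb : c < b)
    (hcrit : ∀ k, 1 ≤ k → k ≤ l → ∀ x ∈ M k, V x ∉ Set.Ioc c b) :
    IsStrongDeformationRetract {x ∈ φ.basin 𝒜 | V x ≤ c} {x ∈ φ.basin 𝒜 | V x ≤ b} :=
  stmt19_general φ hac 𝒜 h𝒜 l M hMD V hV k₀ hk₀ E hME hEq c hc b hb hcrit
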